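/- For Ĝ(k) = 1/(1+δ^2k^2), D̂_0(k) = 1/((1-α)Ĝ(k)+α), and D̂_N(k) = (Σ_{j=0}^N (1 - D̂_0(k)Ĝ(k))^j) D̂_0(k), the symbol of H_N = D_N G satisfies D̂_N(k)Ĝ(k) = 1 - (α δ^2 k^2/(1+α δ^2 k^2))^{N+1} for all real k, δ > 0, α ∈ (0,1), N ∈ ℕ. -/
import Mathlib

theorem DN_G_symbol (δ α k : ℝ) (N : ℕ) (hδ : 0 < δ) (hα0 : 0 < α) (hα1 : α < 1) :
    ((∑ j ∈ Finset.range (N + 1),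
        (1 - (1 / ((1 - α) * (1 / (1 + δ ^ 2 * k ^ 2)) + α)) * (1 / (1 + δ ^ 2 * k ^ 2))) ^ j)
      * (1 / ((1 - α) * (1 / (1 + δ ^ 2 * k ^ 2)) + α))) * (1 / (1 + δ ^ 2 * k ^ 2))
      = 1 - (α * δ ^ 2 * k ^ 2 / (1 + α * δ ^ 2 * k ^ 2)) ^ (N + 1) := by
  have ht : (0:ℝ) ≤ δ ^ 2 * k ^ 2 := by positivity
  have h1 : (0:ℝ) < 1 + δ ^ 2 * k ^ 2 := by linarith
  have h2 : (0:ℝ) < 1 + α * δ ^ 2 * k ^ 2 := by nlinarith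
  have h3 : (0:ℝ) < (1 - α) * (1 / (1 + δ ^ 2 * k ^ 2)) + α := by
    have : (0:ℝ) < 1 / (1 + δ ^ 2 * k ^ 2) := by positivity
    nlinarith
  set r : ℝ := α * δ ^ 2 * k ^ 2 / (1 + α * δ ^ 2 * k ^ 2) with hr
  have e1 : (1 - α) * (1 / (1 + δ ^ 2 * k ^ 2)) + α
      = (1 + α * δ ^ 2 * k ^ 2) / (1 + δ ^ 2 * k ^ 2) := by
    field_simp
    ring
  have key : (1 / ((1 - α) * (1 / (1 + δ ^ 2 * k ^ 2)) + α)) * (1 / (1 + δ ^ 2 * k ^ 2))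
      = 1 - r := by
    rw [e1, hr]
    field_simp
    ring
  rw [key]
  have : (1 : ℝ) - (1 - r) = r := by ring
  rw [this, mul_assoc, key]
  linear_combination -(geom_sum_mul r (N + 1))
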